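/- arXiv:1607.01986 — 4 statements merged into one kernel-verified Lean document; each statement's English description precedes it below -/
import Mathlib

section
/- Let k ≥ 1 and d_D ≥ 1 be integers and Q, R_D ∈ ℂ[X] with Q(im) ≠ 0 and R_D(im) ≠ 0 for all m ∈ ℝ. For m ∈ ℝ set P_m(tau) = Q(im) − R_D(im)(k·tau^k)^{d_D}, which factors as P_m(tau) = −R_D(im)·k^{d_D}·∏_{l=0}^{k·d_D−1}(tau − q_l(m)) where q_l(m) = (|Q(im)|/(|R_D(im)| k^{d_D}))^{1/(k·d_D)} · exp( i( arg(Q(im)/(R_D(im) k^{d_D}))/(k·d_D) + 2π l/(k·d_D) ) ). Suppose D ⊆ ℂ is a set for which there exist M1, M2 > 0 and l0 ∈ {0,…,k·d_D−1} such that |tau − q_l(m)| ≥ M1(1+|tau|) for all 0 ≤ l ≤ k·d_D−1, all m ∈ ℝ and all tau ∈ D, and |tau − q_{l0}(m)| ≥ M2 |q_{l0}(m)| for all m ∈ ℝ and tau ∈ D. Then for all tau ∈ D and m ∈ ℝ: |P_m(tau)| ≥ M1^{k·d_D−1} M2 |R_D(im)| k^{d_D} (|Q(im)|/(|R_D(im)|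 k^{d_D}))^{1/(k·d_D)} (1+|tau|)^{k·d_D−1}. In particular, if moreover |Q(im)/R_D(im)| ≥ r > 0 for all m ∈ ℝ, then |P_m(tau)| ≥ C_P · r^{1/(k·d_D)} |R_D(im)| (1+|tau|)^{k·d_D−1} with C_P = M1^{k·d_D−1} M2 k^{d_D} (k^{d_D})^{−1/(k·d_D)}. -/
/-!
With `c = Q(im) / (R_D(im) k^{d_D})` and `n = k d_D`, the roots `q_l(m)` are the `n` polar
`n`-th roots of `c`, so `P_m(τ) = -R_D(im) k^{d_D} (τ^n - c) = -R_D(im) k^{d_D} ∏_l (τ - q_l(m))`.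
Bounding the factor `l₀` below by `M₂ |q_{l₀}(m)| = M₂ |c|^{1/n}` and each of the other `n - 1`
factors by `M₁ (1 + |τ|)` gives the first estimate; the second follows from
`|c|^{1/n} = |Q(im)/R_D(im)|^{1/n} (k^{d_D})^{-1/n} ≥ r^{1/n} (k^{d_D})^{-1/n}`.
-/

/-- The roots `q_l(m)` of `P_m(tau) = Q(im) - R_D(im)(k tau^k)^{d_D}`. -/
noncomputable def rootQ (Q RD : Polynomial ℂ) (k dD : ℕ) (l : ℕ) (m : ℝ) : ℂ :=
  (((‖Q.eval (Complex.I * m)‖ / (‖RD.eval (Complex.I * m)‖ * (k : ℝ) ^ dD))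
      ^ (1 / (k * dD : ℝ)) : ℝ) : ℂ) *
    Complex.exp (Complex.I *
      (((Complex.arg (Q.eval (Complex.I * m) / (RD.eval (Complex.I * m) * (k : ℂ) ^ dD))
          / (k * dD : ℝ) + 2 * Real.pi * l / (k * dD : ℝ) : ℝ) : ℂ)))

open Complex Polynomial Finset

noncomputable def polarRoot (c : ℂ) (n l : ℕ) : ℂ :=
  ((‖c‖ ^ (1 / (n : ℝ)) : ℝ) : ℂ) * exp (I * ((arg c / n + 2 * Real.pi * l / n : ℝ) : ℂ))

theorem norm_polarRoot (c : ℂ) (n l : ℕ) : ‖polarRoot c n l‖ = ‖c‖ ^ (1 / (n : ℝ)) := by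
  rw [polarRoot, norm_mul, mul_comm I, norm_exp_ofReal_mul_I, mul_one, norm_real,
    Real.norm_of_nonneg (by positivity)]

theorem polarRoot_pow {n : ℕ} (hn : n ≠ 0) (c : ℂ) (l : ℕ) : polarRoot c n l ^ n = c := by
  have hnR : (n : ℝ) ≠ 0 := Nat.cast_ne_zero.2 hn
  have hmod : ((‖c‖ ^ (1 / (n : ℝ)) : ℝ) : ℂ) ^ n = ‖c‖ := by
    rw [← ofReal_pow, ← Real.rpow_natCast, ← Real.rpow_mul (norm_nonneg c),
      one_div_mul_cancel hnR, Real.rpow_one]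
  have harg : (n : ℂ) * (I * ((arg c / n + 2 * Real.pi * l / n : ℝ) : ℂ))
      = arg c * I + l * (2 * Real.pi * I) := by
    push_cast
    field_simp
  rw [polarRoot, mul_pow, hmod, ← exp_nat_mul, harg, exp_add, exp_nat_mul_two_pi_mul_I, mul_one,
    norm_mul_exp_arg_mul_I]

theorem polarRoot_eq_pow_mul {n : ℕ} (hn : n ≠ 0) (c : ℂ) (l : ℕ) :
    polarRoot c n l = exp (2 * Real.pi * I / n) ^ l * polarRoot c n 0 := by
  have hnC : (n : ℂ) ≠ 0 := Nat.cast_ne_zero.2 hn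
  have harg : I * ((arg c / n + 2 * Real.pi * l / n : ℝ) : ℂ)
      = l * (2 * Real.pi * I / n) + I * ((arg c / n + 2 * Real.pi * (0 : ℕ) / n : ℝ) : ℂ) := by
    push_cast
    field_simp
    ring
  rw [polarRoot, polarRoot, harg, exp_add, ← exp_nat_mul]
  ring

theorem pow_sub_eq_prod_sub_polarRoot {n : ℕ} (hn : n ≠ 0) (c z : ℂ) :
    z ^ n - c = ∏ l ∈ range n, (z - polarRoot c n l) := by
  have hfactor := X_pow_sub_C_eq_prod (isPrimitiveRoot_exp n hn) (Nat.pos_of_ne_zero hn)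
    (polarRoot_pow hn c 0)
  simp only [← polarRoot_eq_pow_mul hn] at hfactor
  simpa [eval_prod] using congrArg (eval z) hfactor

theorem rootQ_eq_polarRoot (Q RD : Polynomial ℂ) (k dD l : ℕ) (m : ℝ) :
    rootQ Q RD k dD l m
      = polarRoot (Q.eval (I * m) / (RD.eval (I * m) * (k : ℂ) ^ dD)) (k * dD) l := by
  simp [rootQ, polarRoot]

theorem mul_pow_card_sub_one_le_prod {ι : Type*} {s : Finset ι} {f : ι → ℝ} {a b : ℝ} {i₀ : ι}
    (hi₀ : i₀ ∈ s) (ha : 0 ≤ a) (hf : ∀ i ∈ s, a ≤ f i) (hb : b ≤ f i₀) :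
    b * a ^ (#s - 1) ≤ ∏ i ∈ s, f i := by
  classical
  rw [← mul_prod_erase s f hi₀, ← card_erase_of_mem hi₀, ← prod_const]
  exact mul_le_mul hb (prod_le_prod (fun _ _ ↦ ha) fun i hi ↦ hf i (mem_of_mem_erase hi))
    (prod_nonneg fun _ _ ↦ ha) (ha.trans (hf i₀ hi₀))

theorem sub_mul_pow_eq_neg_mul_pow_sub (A B z : ℂ) (k dD : ℕ) (hB : B * (k : ℂ) ^ dD ≠ 0) :
    A - B * ((k : ℂ) * z ^ k) ^ dD
      = -(B * (k : ℂ) ^ dD) * (z ^ (k * dD) - A / (B * (k : ℂ) ^ dD)) := by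
  rw [mul_sub, neg_mul, neg_mul, mul_div_cancel₀ _ hB, pow_mul]
  ring

theorem norm_eval_sub_eq_prod {k dD : ℕ} (hn : k * dD ≠ 0) (Q RD : Polynomial ℂ) {m : ℝ}
    (hRD : RD.eval (I * m) ≠ 0) (τ : ℂ) :
    ‖Q.eval (I * m) - RD.eval (I * m) * ((k : ℂ) * τ ^ k) ^ dD‖
      = ‖RD.eval (I * m)‖ * (k : ℝ) ^ dD * ∏ l ∈ range (k * dD), ‖τ - rootQ Q RD k dD l m‖ := by
  have hk : (k : ℂ) ≠ 0 := Nat.cast_ne_zero.2 (left_ne_zero_of_mul hn)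
  rw [sub_mul_pow_eq_neg_mul_pow_sub _ _ _ _ _ (mul_ne_zero hRD (pow_ne_zero _ hk)),
    pow_sub_eq_prod_sub_polarRoot hn]
  simp [rootQ_eq_polarRoot, norm_prod]

theorem le_norm_eval_sub {k dD : ℕ} (Q RD : Polynomial ℂ) {m : ℝ} (hRD : RD.eval (I * m) ≠ 0)
    {M1 M2 : ℝ} (hM1 : 0 ≤ M1) {l0 : ℕ} (hl0 : l0 < k * dD) {τ : ℂ}
    (h1 : ∀ l < k * dD, M1 * (1 + ‖τ‖) ≤ ‖τ - rootQ Q RD k dD l m‖)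
    (h2 : M2 * ‖rootQ Q RD k dD l0 m‖ ≤ ‖τ - rootQ Q RD k dD l0 m‖) :
    M1 ^ (k * dD - 1) * M2 * ‖RD.eval (I * m)‖ * (k : ℝ) ^ dD *
        (‖Q.eval (I * m)‖ / (‖RD.eval (I * m)‖ * (k : ℝ) ^ dD)) ^ (1 / (k * dD : ℝ)) *
        (1 + ‖τ‖) ^ (k * dD - 1)
      ≤ ‖Q.eval (I * m) - RD.eval (I * m) * ((k : ℂ) * τ ^ k) ^ dD‖ := by
  have hroot : ‖rootQ Q RD k dD l0 m‖
      = (‖Q.eval (I * m)‖ / (‖RD.eval (I * m)‖ * (k : ℝ) ^ dD)) ^ (1 / (k * dD : ℝ)) := by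
    simp [rootQ_eq_polarRoot, norm_polarRoot]
  have hprod := mul_pow_card_sub_one_le_prod (mem_range.2 hl0) (by positivity)
    (fun l hl ↦ h1 l (mem_range.1 hl)) h2
  rw [card_range, hroot, mul_pow] at hprod
  rw [norm_eval_sub_eq_prod (Nat.ne_zero_of_lt hl0) Q RD hRD]
  calc _ = ‖RD.eval (I * m)‖ * (k : ℝ) ^ dD *
        (M2 * (‖Q.eval (I * m)‖ / (‖RD.eval (I * m)‖ * (k : ℝ) ^ dD)) ^ (1 / (k * dD : ℝ)) *
          (M1 ^ (k * dD - 1) * (1 + ‖τ‖) ^ (k * dD - 1))) := by ring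
    _ ≤ _ := by gcongr

theorem rpow_mul_rpow_neg_le_div_rpow {r x K p : ℝ} (hr : 0 ≤ r) (hrx : r ≤ x) (hK : 0 < K)
    (hp : 0 ≤ p) : r ^ p * K ^ (-p) ≤ (x / K) ^ p := by
  rw [Real.div_rpow (hr.trans hrx) hK.le, Real.rpow_neg hK.le, div_eq_mul_inv]
  gcongr

theorem stmt_1_general (k dD : ℕ)
    (Q RD : Polynomial ℂ)
    (hRD : ∀ m : ℝ, RD.eval (Complex.I * m) ≠ 0)
    (Dset : Set ℂ) (M1 M2 : ℝ) (hM1 : 0 < M1) (hM2 : 0 < M2)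
    (l0 : ℕ) (hl0 : l0 < k * dD)
    (h1 : ∀ l < k * dD, ∀ m : ℝ, ∀ tau ∈ Dset,
      M1 * (1 + ‖tau‖) ≤ ‖tau - rootQ Q RD k dD l m‖)
    (h2 : ∀ m : ℝ, ∀ tau ∈ Dset,
      M2 * ‖rootQ Q RD k dD l0 m‖ ≤ ‖tau - rootQ Q RD k dD l0 m‖) :
    (∀ tau ∈ Dset, ∀ m : ℝ,
      M1 ^ (k * dD - 1) * M2 * ‖RD.eval (Complex.I * m)‖ * (k : ℝ) ^ dD *
          (‖Q.eval (Complex.I * m)‖ / (‖RD.eval (Complex.I * m)‖ * (k : ℝ) ^ dD))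
            ^ (1 / (k * dD : ℝ)) *
          (1 + ‖tau‖) ^ (k * dD - 1)
        ≤ ‖Q.eval (Complex.I * m) - RD.eval (Complex.I * m) * ((k : ℂ) * tau ^ k) ^ dD‖) ∧
    (∀ r : ℝ, 0 < r →
      (∀ m : ℝ, r ≤ ‖Q.eval (Complex.I * m) / RD.eval (Complex.I * m)‖) →
      ∀ tau ∈ Dset, ∀ m : ℝ,
        (M1 ^ (k * dD - 1) * M2 * (k : ℝ) ^ dD * ((k : ℝ) ^ dD) ^ (-(1 / (k * dD : ℝ)))) *
            r ^ (1 / (k * dD : ℝ)) * ‖RD.eval (Complex.I * m)‖ * (1 + ‖tau‖) ^ (k * dD - 1)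
          ≤ ‖Q.eval (Complex.I * m) - RD.eval (Complex.I * m) * ((k : ℂ) * tau ^ k) ^ dD‖) := by
  have bound tau (htau : tau ∈ Dset) m := le_norm_eval_sub Q RD (hRD m) hM1.le hl0
    (fun l hl ↦ h1 l hl m tau htau) (h2 m tau htau)
  refine ⟨bound, fun r hr hrQ tau htau m ↦ le_trans ?_ (bound tau htau m)⟩
  have hk : 0 < (k : ℝ) ^ dD := pow_pos (Nat.cast_pos.2 (Nat.pos_of_ne_zero
    (left_ne_zero_of_mul (Nat.ne_zero_of_lt hl0)))) dD
  have hroot := rpow_mul_rpow_neg_le_div_rpow (p := 1 / (k * dD : ℝ)) hr.le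
    ((hrQ m).trans_eq (norm_div _ _)) hk (by positivity)
  rw [← div_mul_eq_div_div] at hroot
  calc _ = M1 ^ (k * dD - 1) * M2 * ‖RD.eval (I * m)‖ * (k : ℝ) ^ dD *
        (r ^ (1 / (k * dD : ℝ)) * ((k : ℝ) ^ dD) ^ (-(1 / (k * dD : ℝ)))) *
          (1 + ‖tau‖) ^ (k * dD - 1) := by ring
    _ ≤ _ := by gcongr

theorem stmt_1 (k dD : ℕ) (hk : 1 ≤ k) (hdD : 1 ≤ dD)
    (Q RD : Polynomial ℂ)
    (hQ : ∀ m : ℝ, Q.eval (Complex.I * m) ≠ 0)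
    (hRD : ∀ m : ℝ, RD.eval (Complex.I * m) ≠ 0)
    (Dset : Set ℂ) (M1 M2 : ℝ) (hM1 : 0 < M1) (hM2 : 0 < M2)
    (l0 : ℕ) (hl0 : l0 < k * dD)
    (h1 : ∀ l < k * dD, ∀ m : ℝ, ∀ tau ∈ Dset,
      M1 * (1 + ‖tau‖) ≤ ‖tau - rootQ Q RD k dD l m‖)
    (h2 : ∀ m : ℝ, ∀ tau ∈ Dset,
      M2 * ‖rootQ Q RD k dD l0 m‖ ≤ ‖tau - rootQ Q RD k dD l0 m‖) :
    (∀ tau ∈ Dset, ∀ m : ℝ,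
      M1 ^ (k * dD - 1) * M2 * ‖RD.eval (Complex.I * m)‖ * (k : ℝ) ^ dD *
          (‖Q.eval (Complex.I * m)‖ / (‖RD.eval (Complex.I * m)‖ * (k : ℝ) ^ dD))
            ^ (1 / (k * dD : ℝ)) *
          (1 + ‖tau‖) ^ (k * dD - 1)
        ≤ ‖Q.eval (Complex.I * m) - RD.eval (Complex.I * m) * ((k : ℂ) * tau ^ k) ^ dD‖) ∧
    (∀ r : ℝ, 0 < r →
      (∀ m : ℝ, r ≤ ‖Q.eval (Complex.I * m) / RD.eval (Complex.I * m)‖) →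
      ∀ tau ∈ Dset, ∀ m : ℝ,
        (M1 ^ (k * dD - 1) * M2 * (k : ℝ) ^ dD * ((k : ℝ) ^ dD) ^ (-(1 / (k * dD : ℝ)))) *
            r ^ (1 / (k * dD : ℝ)) * ‖RD.eval (Complex.I * m)‖ * (1 + ‖tau‖) ^ (k * dD - 1)
          ≤ ‖Q.eval (Complex.I * m) - RD.eval (Complex.I * m) * ((k : ℂ) * tau ^ k) ^ dD‖) :=
  stmt_1_general k dD Q RD hRD Dset M1 M2 hM1 hM2 l0 hl0 h1 h2
end

section
/- Let nu, beta, mu > 0, let k ≥ 1 be an integer and let Omega ⊆ ℂ be a nonempty open set whose closure cl(Omega) is starshaped with respect to 0. Let Q, R ∈ ℂ[X] with deg(R) ≥ deg(Q) and R(im) ≠ 0 for all m ∈ ℝ, and assume mu > deg(Q) + 1. Let b : ℝ → ℂ be continuous with |b(m)| ≤ 1/|R(im)| for all m ∈ ℝ. Then there exists a constant E3 > 0 (depending on Q, R, mu, k, nu) such that for every f ∈ E_{(beta,mu)} and every g ∈ F_{(nu,beta,mu,k);cl(Omega)}: || b(m) ∫_0^{tau^k} (tau^k − s)^{1/k} (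 ∫_ℝ f(m−m1) Q(i·m1) g(s^{1/k}, m1) dm1 ) ds/s ||_{(nu,beta,mu,k);cl(Omega)} ≤ E3 ||f||_{(beta,mu)} ||g||_{(nu,beta,mu,k);cl(Omega)}, where the inner path integral is along the segment from 0 to tau^k (s = (t·tau)^k, s^{1/k} = t·tau, t ∈ [0,1]). -/
/-!
Split the weight of `F` as `fW = eW · tauWeight`. In the variable `m` the operator is a
convolution: with `e = mu - deg Q > 1`, Peetre's inequality
`(1 + |m|)^e ≤ 2^e ((1 + |m - m1|)^e + (1 + |m1|)^e)` and `|m| ≤ |m - m1| + |m1|` in the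
exponential show that convolution maps `E_{(beta,mu)} × E_{(beta,e)}` into `E_{(beta,e)}`; the
factor `Q(i m1)` costs `(1 + |m1|)^{deg Q}`, which is paid out of `(1 + |m1|)^{-mu}`. In the
variable `tau`, with `x = |tau|` and `y = (1 - t^k) x^k = x^k - (t x)^k`, the kernel
`|tau^k - (t tau)^k|^{1/k} k / t` contributes `y^{1/k} e^{-nu y}`, and this exponential decay
absorbs the growth of `1 + x^{2k}` against `1 + (t x)^{2k}`. Finally `(1 + |m|)^{deg Q} |b(m)|`
is bounded because `deg Q ≤ deg R` and `R` has no zero on the imaginary axis.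
-/

open MeasureTheory Set

noncomputable def eW (beta mu m : ℝ) : ℝ := (1 + |m|) ^ mu * Real.exp (beta * |m|)

/-- Weight defining the norm of the space `F_{(nu,beta,mu,k);cl(Omega)}`. -/
noncomputable def fW (nu beta mu : ℝ) (k : ℕ) (tau : ℂ) (m : ℝ) : ℝ :=
  (1 + |m|) ^ mu * ((1 + ‖tau‖ ^ (2 * k)) / ‖tau‖) *
    Real.exp (beta * |m| - nu * ‖tau‖ ^ k)

open Filter Asymptotics Bornology Polynomial

theorem exists_norm_le_mul_norm_of_isBigO_cocompact {D E F : Type*} [TopologicalSpace D]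
    [SeminormedAddCommGroup E] [NormedAddCommGroup F] {f : D → E} {g : D → F}
    (hf : Continuous f) (hg : Continuous g) (hg0 : ∀ x, g x ≠ 0) (h : f =O[cocompact D] g) :
    ∃ C, 0 ≤ C ∧ ∀ x, ‖f x‖ ≤ C * ‖g x‖ := by
  have hg0' : ∀ x, ‖g x‖ ≠ 0 := fun x => norm_ne_zero_iff.2 (hg0 x)
  have hratio : (fun x => ‖f x‖ / ‖g x‖) =O[cocompact D] (1 : D → ℝ) := by
    obtain ⟨c, hc⟩ := h.bound
    refine .of_bound c (hc.mono fun x hx => ?_)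
    simpa [abs_div, div_le_iff₀ (norm_pos_iff.2 (hg0 x))] using hx
  obtain ⟨C, hC⟩ := isBounded_iff_forall_norm_le.1
    (((hf.norm.div hg.norm hg0').isBounded_range_iff_isBigO).2 hratio)
  refine ⟨max C 0, le_max_right _ _, fun x => ?_⟩
  have := hC _ ⟨x, rfl⟩
  rw [Pi.div_apply, Real.norm_of_nonneg (by positivity), div_le_iff₀ (norm_pos_iff.2 (hg0 x))]
    at this
  exact this.trans (by gcongr; exact le_max_left _ _)

theorem tendsto_I_mul_cocompact_cobounded :
    Tendsto (fun m : ℝ => Complex.I * m) (cocompact ℝ) (cobounded ℂ) := by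
  rw [← tendsto_norm_atTop_iff_cobounded]
  exact tendsto_norm_cocompact_atTop.congr fun m => by simp [Complex.norm_real]

theorem Polynomial.isEquivalent_eval_I_mul (P : ℂ[X]) :
    (fun m : ℝ => P.eval (Complex.I * m)) ~[cocompact ℝ]
      fun m => P.leadingCoeff * (Complex.I * m) ^ P.natDegree :=
  (isEquivalent_cobounded_leading_monomial (P := P)).comp_tendsto tendsto_I_mul_cocompact_cobounded

theorem Polynomial.isBigO_eval_I_mul_one_add_abs_pow (P : ℂ[X]) :
    (fun m : ℝ => P.eval (Complex.I * m)) =O[cocompact ℝ] fun m => (1 + |m|) ^ P.natDegree := by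
  refine P.isEquivalent_eval_I_mul.isBigO.trans
    (isBigO_of_le' (c := ‖P.leadingCoeff‖) _ fun m => ?_)
  simp only [norm_mul, norm_pow, Complex.norm_I, Complex.norm_real,
    Real.norm_eq_abs, one_mul, abs_of_nonneg (by positivity : (0 : ℝ) ≤ 1 + |m|)]
  gcongr
  linarith

theorem Polynomial.isBigO_one_add_abs_pow_eval_I_mul {P : ℂ[X]} (hP : P ≠ 0) {n : ℕ}
    (hn : n ≤ P.natDegree) :
    (fun m : ℝ => (1 + |m|) ^ n) =O[cocompact ℝ] fun m => P.eval (Complex.I * m) := by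
  refine IsBigO.trans ?_ P.isEquivalent_eval_I_mul.isBigO_symm
  have hlead : 0 < ‖P.leadingCoeff‖ := norm_pos_iff.2 (leadingCoeff_ne_zero.2 hP)
  refine .of_bound (2 ^ P.natDegree / ‖P.leadingCoeff‖) ?_
  filter_upwards [tendsto_norm_cocompact_atTop.eventually_ge_atTop 1] with m hm
  rw [Real.norm_eq_abs] at hm
  simp only [norm_mul, norm_pow, Complex.norm_I, Complex.norm_real,
    Real.norm_eq_abs, one_mul, abs_of_nonneg (by positivity : (0 : ℝ) ≤ 1 + |m|)]
  calc (1 + |m|) ^ n ≤ (1 + |m|) ^ P.natDegree := pow_le_pow_right₀ (by linarith) hn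
    _ ≤ (2 * |m|) ^ P.natDegree := by gcongr; linarith
    _ = _ := by field_simp; ring

theorem Polynomial.exists_norm_eval_I_mul_le (P : ℂ[X]) :
    ∃ C, 0 ≤ C ∧ ∀ m : ℝ, ‖P.eval (Complex.I * m)‖ ≤ C * (1 + |m|) ^ P.natDegree := by
  obtain ⟨C, hC, h⟩ := exists_norm_le_mul_norm_of_isBigO_cocompact (by fun_prop) (by fun_prop)
    (fun m => by positivity) P.isBigO_eval_I_mul_one_add_abs_pow
  exact ⟨C, hC, fun m => by simpa [abs_of_nonneg (by positivity : (0 : ℝ) ≤ 1 + |m|)] using h m⟩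

theorem Polynomial.exists_one_add_abs_pow_le_norm_eval_I_mul {P : ℂ[X]}
    (hP : ∀ m : ℝ, P.eval (Complex.I * m) ≠ 0) {n : ℕ} (hn : n ≤ P.natDegree) :
    ∃ C, 0 ≤ C ∧ ∀ m : ℝ, (1 + |m|) ^ n ≤ C * ‖P.eval (Complex.I * m)‖ := by
  obtain ⟨C, hC, h⟩ := exists_norm_le_mul_norm_of_isBigO_cocompact (by fun_prop) (by fun_prop)
    hP (isBigO_one_add_abs_pow_eval_I_mul (fun h0 => hP 0 (by simp [h0])) hn)
  exact ⟨C, hC, fun m => by simpa [abs_of_nonneg (by positivity : (0 : ℝ) ≤ 1 + |m|)] using h m⟩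

theorem Real.add_rpow_le_two_rpow_mul_add_rpow {a b p : ℝ} (ha : 0 ≤ a) (hb : 0 ≤ b) (hp : 0 ≤ p) :
    (a + b) ^ p ≤ 2 ^ p * (a ^ p + b ^ p) := by
  calc (a + b) ^ p ≤ (2 * max a b) ^ p :=
        rpow_le_rpow (by positivity) (by linarith [le_max_left a b, le_max_right a b]) hp
    _ = 2 ^ p * max (a ^ p) (b ^ p) := by
        rw [mul_rpow zero_le_two (by positivity), rpow_max ha hb hp]
    _ ≤ 2 ^ p * (a ^ p + b ^ p) := by
        gcongr
        exact max_le (le_add_of_nonneg_right (by positivity))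
          (le_add_of_nonneg_left (by positivity))

theorem eW_pos (beta mu m : ℝ) : 0 < eW beta mu m := by
  unfold eW; positivity

theorem eW_le_eW_of_exponent_le {beta e mu : ℝ} (hem : e ≤ mu) (m : ℝ) :
    eW beta e m ≤ eW beta mu m := by
  unfold eW
  gcongr
  linarith [abs_nonneg m]

theorem eW_eq_pow_mul_eW_sub (beta mu m : ℝ) (n : ℕ) :
    eW beta mu m = (1 + |m|) ^ n * eW beta (mu - n) m := by
  unfold eW
  rw [← Real.rpow_natCast, ← mul_assoc, ← Real.rpow_add (by positivity), add_sub_cancel]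

theorem eW_peetre {beta e : ℝ} (hbeta : 0 ≤ beta) (he : 0 ≤ e) (m m1 : ℝ) :
    eW beta e m ≤ 2 ^ e * (eW beta e (m - m1) * eW beta e m1) *
      ((1 + |m1|) ^ (-e) + (1 + |m - m1|) ^ (-e)) := by
  have htri : |m| ≤ |m - m1| + |m1| := by simpa using abs_sub_le m m1 0
  have ha : 0 < 1 + |m - m1| := by positivity
  have hb : 0 < 1 + |m1| := by positivity
  have hpow : (1 + |m|) ^ e ≤ 2 ^ e * ((1 + |m - m1|) ^ e * (1 + |m1|) ^ e) *
      ((1 + |m1|) ^ (-e) + (1 + |m - m1|) ^ (-e)) := by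
    calc (1 + |m|) ^ e ≤ ((1 + |m - m1|) + (1 + |m1|)) ^ e :=
          Real.rpow_le_rpow (by positivity) (by linarith) he
      _ ≤ 2 ^ e * ((1 + |m - m1|) ^ e + (1 + |m1|) ^ e) :=
          Real.add_rpow_le_two_rpow_mul_add_rpow ha.le hb.le he
      _ = _ := by
          rw [Real.rpow_neg hb.le, Real.rpow_neg ha.le]
          field_simp
  have hexp : Real.exp (beta * |m|) ≤ Real.exp (beta * |m - m1|) * Real.exp (beta * |m1|) := by
    rw [← Real.exp_add, ← mul_add]
    gcongr
  calc eW beta e m ≤ (2 ^ e * ((1 + |m - m1|) ^ e * (1 + |m1|) ^ e) *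
      ((1 + |m1|) ^ (-e) + (1 + |m - m1|) ^ (-e))) *
        (Real.exp (beta * |m - m1|) * Real.exp (beta * |m1|)) :=
        mul_le_mul hpow hexp (by positivity) (by positivity)
    _ = _ := by unfold eW; ring

noncomputable def convConst (e : ℝ) : ℝ := 2 ^ (e + 1) * ∫ y : ℝ, (1 + |y|) ^ (-e)

theorem convConst_nonneg (e : ℝ) : 0 ≤ convConst e :=
  mul_nonneg (by positivity) (integral_nonneg fun _ => by positivity)

theorem eW_mul_norm_integral_mul_le {A : Type*} [NormedRing A] [NormedSpace ℝ A]
    {beta e mu : ℝ} (hbeta : 0 ≤ beta) (he : 1 < e) (hem : e ≤ mu) {f h : ℝ → A} {Bf Bh : ℝ}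
    (hf : ∀ s, eW beta mu s * ‖f s‖ ≤ Bf) (hh : ∀ s, eW beta e s * ‖h s‖ ≤ Bh) (m : ℝ) :
    eW beta e m * ‖∫ m1, f (m - m1) * h m1‖ ≤ convConst e * Bf * Bh := by
  have hBf : 0 ≤ Bf := (mul_nonneg (eW_pos _ _ _).le (norm_nonneg _)).trans (hf 0)
  have hBh : 0 ≤ Bh := (mul_nonneg (eW_pos _ _ _).le (norm_nonneg _)).trans (hh 0)
  have hint : Integrable fun y : ℝ => (1 + |y|) ^ (-e) := by
    simpa using integrable_one_add_norm (E := ℝ) (μ := volume) (r := e) (by simpa using he)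
  have hpt : ∀ m1, ‖eW beta e m • (f (m - m1) * h m1)‖ ≤
      2 ^ e * Bf * Bh * ((1 + |m1|) ^ (-e) + (1 + |m - m1|) ^ (-e)) := by
    intro m1
    rw [norm_smul, Real.norm_of_nonneg (eW_pos _ _ _).le]
    calc eW beta e m * ‖f (m - m1) * h m1‖
        ≤ (2 ^ e * (eW beta e (m - m1) * eW beta e m1) *
            ((1 + |m1|) ^ (-e) + (1 + |m - m1|) ^ (-e))) * (‖f (m - m1)‖ * ‖h m1‖) :=
          mul_le_mul (eW_peetre hbeta (by linarith) m m1) (norm_mul_le _ _) (norm_nonneg _)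
            (mul_nonneg (mul_nonneg (by positivity)
              (mul_nonneg (eW_pos _ _ _).le (eW_pos _ _ _).le)) (by positivity))
      _ = 2 ^ e * ((eW beta e (m - m1) * ‖f (m - m1)‖) * (eW beta e m1 * ‖h m1‖)) *
            ((1 + |m1|) ^ (-e) + (1 + |m - m1|) ^ (-e)) := by ring
      _ ≤ 2 ^ e * (Bf * Bh) * ((1 + |m1|) ^ (-e) + (1 + |m - m1|) ^ (-e)) := by
          gcongr 2 ^ e * ?_ * _
          refine mul_le_mul ?_ (hh m1) (mul_nonneg (eW_pos _ _ _).le (norm_nonneg _)) hBf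
          exact (mul_le_mul_of_nonneg_right (eW_le_eW_of_exponent_le hem _) (norm_nonneg _)).trans
            (hf _)
      _ = _ := by ring
  calc eW beta e m * ‖∫ m1, f (m - m1) * h m1‖ = ‖∫ m1, eW beta e m • (f (m - m1) * h m1)‖ := by
        rw [integral_smul, norm_smul, Real.norm_of_nonneg (eW_pos _ _ _).le]
    _ ≤ ∫ m1, 2 ^ e * Bf * Bh * ((1 + |m1|) ^ (-e) + (1 + |m - m1|) ^ (-e)) :=
        norm_integral_le_of_norm_le ((hint.add (hint.comp_sub_left m)).const_mul _)
          (ae_of_all _ hpt)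
    _ = _ := by
        rw [integral_const_mul, integral_add hint (hint.comp_sub_left m),
          integral_sub_left_eq_self (fun y : ℝ => (1 + |y|) ^ (-e)), convConst,
          Real.rpow_add_one two_ne_zero]
        ring

theorem eW_mul_norm_integral_mul_eval_mul_le {Q : ℂ[X]} {cQ beta mu : ℝ} (hbeta : 0 ≤ beta)
    (he : 1 < mu - Q.natDegree) (hcQ : 0 ≤ cQ)
    (hQ : ∀ m : ℝ, ‖Q.eval (Complex.I * m)‖ ≤ cQ * (1 + |m|) ^ Q.natDegree)
    {f G : ℝ → ℂ} {Bf BG : ℝ} (hf : ∀ s, eW beta mu s * ‖f s‖ ≤ Bf)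
    (hG : ∀ s, eW beta mu s * ‖G s‖ ≤ BG) (m : ℝ) :
    eW beta (mu - Q.natDegree) m * ‖∫ m1, f (m - m1) * Q.eval (Complex.I * m1) * G m1‖ ≤
      convConst (mu - Q.natDegree) * Bf * (cQ * BG) := by
  simp_rw [mul_assoc (f _)]
  refine eW_mul_norm_integral_mul_le hbeta he (by linarith [Nat.cast_nonneg (α := ℝ) Q.natDegree])
    hf (fun s => ?_) m
  calc eW beta (mu - Q.natDegree) s * ‖Q.eval (Complex.I * s) * G s‖
      ≤ eW beta (mu - Q.natDegree) s * (cQ * (1 + |s|) ^ Q.natDegree * ‖G s‖) := by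
        rw [norm_mul]
        exact mul_le_mul_of_nonneg_left (mul_le_mul_of_nonneg_right (hQ s) (norm_nonneg _))
          (eW_pos _ _ _).le
    _ = cQ * (eW beta mu s * ‖G s‖) := by rw [eW_eq_pow_mul_eW_sub beta mu s Q.natDegree]; ring
    _ ≤ cQ * BG := mul_le_mul_of_nonneg_left (hG s) hcQ

noncomputable def tauWeight (nu : ℝ) (k : ℕ) (x : ℝ) : ℝ :=
  (1 + x ^ (2 * k)) / x * Real.exp (-(nu * x ^ k))

theorem fW_eq_eW_mul_tauWeight (nu beta mu : ℝ) (k : ℕ) (tau : ℂ) (m : ℝ) :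
    fW nu beta mu k tau m = eW beta mu m * tauWeight nu k ‖tau‖ := by
  unfold fW eW tauWeight
  rw [sub_eq_add_neg, Real.exp_add]
  ring

theorem tauWeight_pos (nu : ℝ) (k : ℕ) {x : ℝ} (hx : 0 < x) : 0 < tauWeight nu k x := by
  unfold tauWeight; positivity

theorem Real.one_add_le_mul_exp {a y : ℝ} (ha : 0 < a) (hy : 0 ≤ y) :
    1 + y ≤ (1 + 1 / a) * exp (a * y) := by
  calc 1 + y ≤ (1 + 1 / a) * (a * y + 1) := by
        have : 0 ≤ a * y + 1 / a := by positivity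
        rw [show (1 + 1 / a) * (a * y + 1) = 1 + y + (a * y + 1 / a) by field_simp; ring]
        linarith
    _ ≤ (1 + 1 / a) * exp (a * y) := by gcongr; exact add_one_le_exp _

theorem Real.rpow_inv_natCast_le_one_add {y : ℝ} (hy : 0 ≤ y) (k : ℕ) :
    y ^ ((k : ℝ)⁻¹) ≤ 1 + y := by
  rcases le_total y 1 with h | h
  · linarith [rpow_le_one hy h (by positivity : (0 : ℝ) ≤ (k : ℝ)⁻¹)]
  · linarith [rpow_one y ▸ rpow_le_rpow_of_exponent_le h (Nat.cast_inv_le_one k)]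

theorem one_add_mul_one_add_sq_mul_exp_le {nu y s : ℝ} (hnu : 0 < nu) (hy : 0 ≤ y) :
    (1 + y) * (1 + (y + s) ^ 2) * Real.exp (-(nu * y)) ≤ 2 * (1 + 3 / nu) ^ 3 * (1 + s ^ 2) := by
  have hsq : 1 + (y + s) ^ 2 ≤ 2 * (1 + y) ^ 2 * (1 + s ^ 2) := by
    nlinarith [sq_nonneg (y - s), mul_nonneg hy (sq_nonneg s),
      mul_nonneg (sq_nonneg y) (sq_nonneg s)]
  have hcube : (1 + y) ^ 3 ≤ (1 + 3 / nu) ^ 3 * Real.exp (nu * y) := by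
    have h := Real.one_add_le_mul_exp (a := nu / 3) (by positivity) hy
    rw [one_div_div] at h
    calc (1 + y) ^ 3 ≤ ((1 + 3 / nu) * Real.exp (nu / 3 * y)) ^ 3 := by gcongr
      _ = (1 + 3 / nu) ^ 3 * Real.exp (nu * y) := by
          rw [mul_pow, ← Real.exp_nat_mul]; ring_nf
  calc (1 + y) * (1 + (y + s) ^ 2) * Real.exp (-(nu * y))
      ≤ (1 + y) * (2 * (1 + y) ^ 2 * (1 + s ^ 2)) * Real.exp (-(nu * y)) := by gcongr
    _ = 2 * (1 + s ^ 2) * ((1 + y) ^ 3 * Real.exp (-(nu * y))) := by ring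
    _ ≤ 2 * (1 + s ^ 2) * ((1 + 3 / nu) ^ 3 * Real.exp (nu * y) * Real.exp (-(nu * y))) := by
        gcongr
    _ = 2 * (1 + 3 / nu) ^ 3 * (1 + s ^ 2) := by
        rw [mul_assoc _ (Real.exp _), ← Real.exp_add, add_neg_cancel, Real.exp_zero]; ring

theorem tauWeight_mul_kernel_le {nu : ℝ} (hnu : 0 < nu) (k : ℕ) {x t : ℝ} (hx : 0 < x)
    (ht : 0 < t) (ht1 : t ≤ 1) :
    tauWeight nu k x * (((1 - t ^ k) * x ^ k) ^ ((k : ℝ)⁻¹) * k / t) ≤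
      2 * k * (1 + 3 / nu) ^ 3 * tauWeight nu k (t * x) := by
  unfold tauWeight
  set y := (1 - t ^ k) * x ^ k with hy_def
  set s := (t * x) ^ k with hs_def
  have hy : 0 ≤ y := mul_nonneg (sub_nonneg.2 (pow_le_one₀ ht.le ht1)) (by positivity)
  have hxk : x ^ k = y + s := by rw [hy_def, hs_def, mul_pow]; ring
  have hx2k : x ^ (2 * k) = (y + s) ^ 2 := by rw [pow_mul', hxk]
  have htx2k : (t * x) ^ (2 * k) = s ^ 2 := by rw [pow_mul']
  rw [hx2k, htx2k, hxk, mul_add, neg_add, Real.exp_add]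
  calc _ = k * Real.exp (-(nu * s)) / (t * x) *
          (y ^ ((k : ℝ)⁻¹) * (1 + (y + s) ^ 2) * Real.exp (-(nu * y))) := by
        field_simp
    _ ≤ k * Real.exp (-(nu * s)) / (t * x) *
          ((1 + y) * (1 + (y + s) ^ 2) * Real.exp (-(nu * y))) := by
        gcongr; exact Real.rpow_inv_natCast_le_one_add hy k
    _ ≤ k * Real.exp (-(nu * s)) / (t * x) * (2 * (1 + 3 / nu) ^ 3 * (1 + s ^ 2)) :=
        mul_le_mul_of_nonneg_left (one_add_mul_one_add_sq_mul_exp_le hnu hy) (by positivity)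
    _ = _ := by field_simp

theorem tauWeight_mul_norm_integrand_le {nu : ℝ} (hnu : 0 < nu) (k : ℕ) {tau : ℂ}
    (htau : tau ≠ 0) {t : ℝ} (ht : 0 < t) (ht1 : t ≤ 1) (z : ℂ) :
    tauWeight nu k ‖tau‖ *
        ‖(tau ^ k - ((t : ℂ) * tau) ^ k) ^ ((1 : ℂ) / k) * z * (k : ℂ) / (t : ℂ)‖ ≤
      2 * k * (1 + 3 / nu) ^ 3 * tauWeight nu k (t * ‖tau‖) * ‖z‖ := by
  have hcpow : ‖(tau ^ k - ((t : ℂ) * tau) ^ k) ^ ((1 : ℂ) / k)‖ =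
      ((1 - t ^ k) * ‖tau‖ ^ k) ^ ((k : ℝ)⁻¹) := by
    rw [show tau ^ k - ((t : ℂ) * tau) ^ k = ((1 - t ^ k : ℝ) : ℂ) * tau ^ k by push_cast; ring,
      one_div, Complex.norm_cpow_inv_nat, norm_mul, norm_pow, Complex.norm_real,
      Real.norm_of_nonneg (sub_nonneg.2 (pow_le_one₀ ht.le ht1))]
  rw [norm_div, norm_mul, norm_mul, hcpow, Complex.norm_natCast, Complex.norm_real,
    Real.norm_of_nonneg ht.le]
  calc _ = tauWeight nu k ‖tau‖ * (((1 - t ^ k) * ‖tau‖ ^ k) ^ ((k : ℝ)⁻¹) * k / t) * ‖z‖ := by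
        ring
    _ ≤ _ := mul_le_mul_of_nonneg_right
        (tauWeight_mul_kernel_le hnu k (norm_pos_iff.2 htau) ht ht1) (norm_nonneg z)

theorem eW_mul_tauWeight_mul_norm_integral_le {Q : ℂ[X]} {cQ beta mu nu : ℝ} {k : ℕ}
    (hbeta : 0 ≤ beta) (hnu : 0 < nu) (he : 1 < mu - Q.natDegree) (hcQ : 0 ≤ cQ)
    (hQ : ∀ m : ℝ, ‖Q.eval (Complex.I * m)‖ ≤ cQ * (1 + |m|) ^ Q.natDegree)
    {f : ℝ → ℂ} {Bf : ℝ} (hf : ∀ s, eW beta mu s * ‖f s‖ ≤ Bf)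
    {g : ℂ → ℝ → ℂ} {Bg : ℝ} {tau : ℂ} (htau : tau ≠ 0)
    (hg : ∀ t ∈ Ioc (0 : ℝ) 1, ∀ m, fW nu beta mu k ((t : ℂ) * tau) m * ‖g ((t : ℂ) * tau) m‖ ≤ Bg)
    (m : ℝ) :
    eW beta (mu - Q.natDegree) m * tauWeight nu k ‖tau‖ *
        ‖∫ t in (0 : ℝ)..1, (tau ^ k - ((t : ℂ) * tau) ^ k) ^ ((1 : ℂ) / k) *
          (∫ m1 : ℝ, f (m - m1) * Q.eval (Complex.I * m1) * g ((t : ℂ) * tau) m1) *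
          (k : ℂ) / (t : ℂ)‖ ≤
      2 * k * (1 + 3 / nu) ^ 3 * convConst (mu - Q.natDegree) * Bf * (cQ * Bg) := by
  have hw := mul_pos (eW_pos beta (mu - Q.natDegree) m) (tauWeight_pos nu k (norm_pos_iff.2 htau))
  rw [← le_div_iff₀' hw]
  refine (intervalIntegral.norm_integral_le_of_norm_le_const (C := _ / _)
    fun t ht => (le_div_iff₀' hw).2 ?_).trans_eq (by rw [sub_zero, abs_one, mul_one])
  rw [uIoc_of_le zero_le_one] at ht
  have hwt := tauWeight_pos nu k (mul_pos ht.1 (norm_pos_iff.2 htau))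
  have hgt : ∀ m1, eW beta mu m1 * ‖g ((t : ℂ) * tau) m1‖ ≤ Bg / tauWeight nu k (t * ‖tau‖) := by
    intro m1
    have := hg t ht m1
    rwa [fW_eq_eW_mul_tauWeight, norm_mul, Complex.norm_real, Real.norm_of_nonneg ht.1.le,
      mul_right_comm, ← le_div_iff₀ hwt] at this
  calc _ = eW beta (mu - Q.natDegree) m * (tauWeight nu k ‖tau‖ * ‖_‖) := by ring
    _ ≤ eW beta (mu - Q.natDegree) m * (2 * k * (1 + 3 / nu) ^ 3 * tauWeight nu k (t * ‖tau‖) *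
          ‖∫ m1 : ℝ, f (m - m1) * Q.eval (Complex.I * m1) * g ((t : ℂ) * tau) m1‖) :=
        mul_le_mul_of_nonneg_left (tauWeight_mul_norm_integrand_le hnu k htau ht.1 ht.2 _)
          (eW_pos _ _ _).le
    _ = 2 * k * (1 + 3 / nu) ^ 3 * tauWeight nu k (t * ‖tau‖) * (eW beta (mu - Q.natDegree) m *
          ‖∫ m1 : ℝ, f (m - m1) * Q.eval (Complex.I * m1) * g ((t : ℂ) * tau) m1‖) := by ring
    _ ≤ 2 * k * (1 + 3 / nu) ^ 3 * tauWeight nu k (t * ‖tau‖) *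
          (convConst (mu - Q.natDegree) * Bf * (cQ * (Bg / tauWeight nu k (t * ‖tau‖)))) :=
        mul_le_mul_of_nonneg_left (eW_mul_norm_integral_mul_eval_mul_le hbeta he hcQ hQ hf hgt m)
          (by positivity)
    _ = _ := by field_simp

theorem stmt_4_general (Q R : Polynomial ℂ) (mu nu : ℝ) (k : ℕ)
    (hdeg : Q.natDegree ≤ R.natDegree)
    (hR : ∀ m : ℝ, R.eval (Complex.I * m) ≠ 0)
    (hmu : (Q.natDegree : ℝ) + 1 < mu)
    (hnu : 0 < nu) :
    ∃ E3 : ℝ, 0 < E3 ∧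
    ∀ beta : ℝ, 0 < beta →
    ∀ Omega : Set ℂ, IsOpen Omega → Omega.Nonempty →
      (∀ z ∈ closure Omega, ∀ t ∈ Set.Icc (0:ℝ) 1, (t : ℂ) • z ∈ closure Omega) →
    ∀ b : ℝ → ℂ, Continuous b →
      (∀ m : ℝ, ‖b m‖ ≤ 1 / ‖R.eval (Complex.I * m)‖) →
    ∀ f : ℝ → ℂ, Continuous f →
    ∀ Bf : ℝ, (∀ m : ℝ, eW beta mu m * ‖f m‖ ≤ Bf) →
    ∀ g : ℂ → ℝ → ℂ,
      ContinuousOn (fun p : ℂ × ℝ => g p.1 p.2) (closure Omega ×ˢ univ) →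
      (∀ m : ℝ, DifferentiableOn ℂ (fun tau => g tau m) Omega) →
    ∀ Bg : ℝ,
      (∀ tau ∈ closure Omega, ∀ m : ℝ, fW nu beta mu k tau m * ‖g tau m‖ ≤ Bg) →
    ∀ tau ∈ closure Omega, ∀ m : ℝ,
      fW nu beta mu k tau m *
        ‖b m * ∫ t in (0:ℝ)..1,
            (tau ^ k - ((t : ℂ) * tau) ^ k) ^ ((1 : ℂ) / k) *
              (∫ m1 : ℝ, f (m - m1) * Q.eval (Complex.I * m1) * g ((t : ℂ) * tau) m1) *
              (k : ℂ) / (t : ℂ)‖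
        ≤ E3 * Bf * Bg := by
  obtain ⟨cQ, hcQ, hQ⟩ := Q.exists_norm_eval_I_mul_le
  obtain ⟨cR, hcR, hRQ⟩ := exists_one_add_abs_pow_le_norm_eval_I_mul hR hdeg
  have he : 1 < mu - Q.natDegree := by linarith
  set E := cR * (2 * k * (1 + 3 / nu) ^ 3 * convConst (mu - Q.natDegree) * cQ)
  have hE : 0 ≤ E := by have := convConst_nonneg (mu - Q.natDegree); positivity
  refine ⟨E + 1, by linarith, ?_⟩
  intro beta hbeta Omega _ _ hstar b _ hb f _ Bf hf g _ _ Bg hg tau htau m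
  have hBf : 0 ≤ Bf := (mul_nonneg (eW_pos _ _ _).le (norm_nonneg _)).trans (hf 0)
  have hBg : 0 ≤ Bg := (mul_nonneg (by unfold fW; positivity) (norm_nonneg _)).trans (hg tau htau 0)
  refine le_trans ?_ (by gcongr; linarith : E * Bf * Bg ≤ (E + 1) * Bf * Bg)
  rcases eq_or_ne tau 0 with rfl | htau0
  · -- `fW` vanishes at `tau = 0` through the junk value `x / 0 = 0`.
    simp only [fW, norm_zero, div_zero, mul_zero, zero_mul]
    positivity
  have hbm : (1 + |m|) ^ Q.natDegree * ‖b m‖ ≤ cR := by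
    have hRm := norm_pos_iff.2 (hR m)
    calc _ ≤ cR * ‖R.eval (Complex.I * m)‖ * (1 / ‖R.eval (Complex.I * m)‖) :=
          mul_le_mul (hRQ m) (hb m) (norm_nonneg _) (by positivity)
      _ = cR := by field_simp
  have hint := eW_mul_tauWeight_mul_norm_integral_le hbeta.le hnu he hcQ hQ hf htau0
    (fun t ht => hg _ (by simpa using hstar tau htau t (Ioc_subset_Icc_self ht))) m
  have hw := mul_nonneg (eW_pos beta (mu - Q.natDegree) m).le
    (tauWeight_pos nu k (norm_pos_iff.2 htau0)).le
  refine le_trans (le_of_eq ?_)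
    ((mul_le_mul hbm hint (mul_nonneg hw (norm_nonneg _)) hcR).trans_eq (by ring))
  rw [norm_mul, fW_eq_eW_mul_tauWeight, eW_eq_pow_mul_eW_sub beta mu m Q.natDegree]
  ring

theorem stmt_4 (Q R : Polynomial ℂ) (mu nu : ℝ) (k : ℕ)
    (hdeg : Q.natDegree ≤ R.natDegree)
    (hR : ∀ m : ℝ, R.eval (Complex.I * m) ≠ 0)
    (hmu : (Q.natDegree : ℝ) + 1 < mu)
    (hk : 1 ≤ k) (hnu : 0 < nu) :
    ∃ E3 : ℝ, 0 < E3 ∧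
    ∀ beta : ℝ, 0 < beta →
    ∀ Omega : Set ℂ, IsOpen Omega → Omega.Nonempty →
      (∀ z ∈ closure Omega, ∀ t ∈ Set.Icc (0:ℝ) 1, (t : ℂ) • z ∈ closure Omega) →
    ∀ b : ℝ → ℂ, Continuous b →
      (∀ m : ℝ, ‖b m‖ ≤ 1 / ‖R.eval (Complex.I * m)‖) →
    ∀ f : ℝ → ℂ, Continuous f →
    ∀ Bf : ℝ, (∀ m : ℝ, eW beta mu m * ‖f m‖ ≤ Bf) →
    ∀ g : ℂ → ℝ → ℂ,
      ContinuousOn (fun p : ℂ × ℝ => g p.1 p.2) (closure Omega ×ˢ univ) →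
      (∀ m : ℝ, DifferentiableOn ℂ (fun tau => g tau m) Omega) →
    ∀ Bg : ℝ,
      (∀ tau ∈ closure Omega, ∀ m : ℝ, fW nu beta mu k tau m * ‖g tau m‖ ≤ Bg) →
    ∀ tau ∈ closure Omega, ∀ m : ℝ,
      fW nu beta mu k tau m *
        ‖b m * ∫ t in (0:ℝ)..1,
            (tau ^ k - ((t : ℂ) * tau) ^ k) ^ ((1 : ℂ) / k) *
              (∫ m1 : ℝ, f (m - m1) * Q.eval (Complex.I * m1) * g ((t : ℂ) * tau) m1) *
              (k : ℂ) / (t : ℂ)‖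
        ≤ E3 * Bf * Bg :=
  stmt_4_general Q R mu nu k hdeg hR hmu hnu
end

section
/- Let q > 1, let Δ1, Δ2, Δ3 > 0 be real numbers and 0 < Δ4 < 1. Then for any kappa with 0 < kappa < 2 Δ2 log^2(q)/log^2(Δ4), there exist a real number 0 < upsilon < Δ3 and constants D1 ∈ ℝ and D2 > 0 such that Σ_{j ≥ 0} Δ1^j q^{−Δ2 j^2} exp( −Δ3 Δ4^j / eps ) ≤ D2 exp( −(kappa/(2 log q)) log^2(eps) ) eps^{D1} for all eps ∈ (0, upsilon]. -/
/-!
Put `eps = exp (-L)`, `A = Δ2 log q`, `B = -log Δ4` and `c = κ / (2 log q)`; the hypothesis on `κ`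
says exactly `c B² < A`. The `j`-th term is `exp (j log Δ1 - A j² - Δ3 exp (L - B j))`. Fix `s < 1`
with `s² ≥ c B² / A`. If `B j ≥ s L`, the Gaussian factor alone gives `A j² ≥ c L²`; if `B j < s L`,
the double exponential `exp (-Δ3 exp ((1 - s) L))` beats `exp (-c L²)` for large `L`. Giving up
a little of `A` absorbs the linear term `j log (2 Δ1)` at the cost of a constant factor, which
leaves a geometric factor `2⁻ʲ`; so `D1 = 0` works.
-/

open Real Filter Topology Set

lemma mul_le_mul_sq_add_sq_div {δ : ℝ} (hδ : 0 < δ) (C x : ℝ) :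
    C * x ≤ δ * x ^ 2 + C ^ 2 / (4 * δ) := by
  have hsq : 0 ≤ δ * (x - C / (2 * δ)) ^ 2 := by positivity
  have hexpand : δ * (x - C / (2 * δ)) ^ 2 = δ * x ^ 2 + C ^ 2 / (4 * δ) - C * x := by
    field_simp; ring
  linarith

lemma eventually_forall_mul_sq_le_mul_sq_add_exp {A B c D : ℝ} (hA : 0 < A) (hB : 0 < B)
    (hD : 0 < D) (hc : c * B ^ 2 < A) :
    ∀ᶠ L in atTop, ∀ x, 0 ≤ x → c * L ^ 2 ≤ A * x ^ 2 + D * exp (L - B * x) := by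
  set r := c * B ^ 2 / A
  have hr : r < 1 := (div_lt_one hA).2 hc
  -- `s ≥ √r` because `s² - r = ((1 - r) / 2)²`
  set s := (1 + r) / 2
  have hs1 : s < 1 := by simp only [s]; linarith
  have hrs : r ≤ s ^ 2 := by simp only [s]; nlinarith [sq_nonneg (1 - r)]
  filter_upwards [((isLittleO_pow_exp_pos_mul_atTop 2 (sub_pos.2 hs1)).const_mul_left c).bound hD,
    eventually_ge_atTop 0] with L hL hL0 x hx
  have hexp : 0 < D * exp (L - B * x) := by positivity
  by_cases hquad : c * L ^ 2 ≤ A * x ^ 2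
  · linarith
  have hc0 : 0 < c := by
    by_contra! h
    exact hquad (by nlinarith [sq_nonneg L, sq_nonneg x])
  have hBx : B * x < s * L := by
    by_contra! h
    have hs0 : 0 < s := by simp only [s, r]; positivity
    have hsq : (s * L) ^ 2 ≤ (B * x) ^ 2 := pow_le_pow_left₀ (by positivity) h 2
    have hrL : r * L ^ 2 ≤ (B * x) ^ 2 := by
      nlinarith [mul_le_mul_of_nonneg_right hrs (sq_nonneg L)]
    rw [div_mul_eq_mul_div, div_le_iff₀ hA] at hrL
    exact hquad (le_of_mul_le_mul_left (by nlinarith) (pow_pos hB 2))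
  have hL' : c * L ^ 2 ≤ D * exp ((1 - s) * L) := by
    simpa [Real.norm_eq_abs, abs_of_nonneg hL0, abs_of_pos hc0] using hL
  have hmono : D * exp ((1 - s) * L) ≤ D * exp (L - B * x) := by gcongr; linarith
  nlinarith [sq_nonneg x]

lemma exists_eventually_forall_mul_sq_le {A B c D : ℝ} (hc0 : 0 < c) (hB : 0 < B) (hD : 0 < D)
    (hc : c * B ^ 2 < A) (C : ℝ) :
    ∃ K, ∀ᶠ L in atTop, ∀ x, 0 ≤ x →
      c * L ^ 2 ≤ A * x ^ 2 - C * x + D * exp (L - B * x) + K := by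
  set δ := (A - c * B ^ 2) / 2
  have hδ : 0 < δ := by simp only [δ]; linarith
  have hAδ : 0 < A - δ := by simp only [δ]; nlinarith [mul_pos hc0 (pow_pos hB 2)]
  have hcδ : c * B ^ 2 < A - δ := by simp only [δ]; linarith
  refine ⟨C ^ 2 / (4 * δ), ?_⟩
  filter_upwards [eventually_forall_mul_sq_le_mul_sq_add_exp hAδ hB hD hcδ] with L hL x hx
  linarith [hL x hx, mul_le_mul_sq_add_sq_div hδ C x]

lemma tsum_le_two_mul_of_le_geometric {f : ℕ → ℝ} {M : ℝ} (hf0 : ∀ j, 0 ≤ f j)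
    (hf : ∀ j, f j ≤ (1 / 2) ^ j * M) : ∑' j, f j ≤ 2 * M := by
  have hg : Summable fun j : ℕ => (1 / 2 : ℝ) ^ j * M := summable_geometric_two.mul_right M
  calc ∑' j, f j ≤ ∑' j : ℕ, (1 / 2 : ℝ) ^ j * M :=
        (hg.of_nonneg_of_le hf0 hf).tsum_le_tsum hf hg
    _ = 2 * M := by rw [tsum_mul_right, tsum_geometric_two]

lemma exists_Ioc_of_eventually_nhdsGT {α : Type*} [LinearOrder α] [TopologicalSpace α]
    [OrderTopology α] [NoMaxOrder α] [DenselyOrdered α] {p : α → Prop} {a b : α}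
    (hp : ∀ᶠ x in 𝓝[>] a, p x) (hab : a < b) : ∃ υ, a < υ ∧ υ < b ∧ ∀ x ∈ Ioc a υ, p x := by
  obtain ⟨u, hu, hIoc⟩ := mem_nhdsGT_iff_exists_Ioc_subset.1 hp
  obtain ⟨m, ham, hmb⟩ := exists_between hab
  exact ⟨min u m, lt_min hu ham, (min_le_right _ _).trans_lt hmb,
    fun x hx => hIoc ⟨hx.1, hx.2.trans (min_le_left _ _)⟩⟩

lemma pow_mul_rpow_mul_exp_eq_exp {a q d eps : ℝ} (ha : 0 < a) (hq : 0 < q) (hd : 0 < d)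
    (heps : 0 < eps) (b e : ℝ) (j : ℕ) :
    a ^ j * q ^ (-b * (j : ℝ) ^ 2) * exp (-e * d ^ j / eps) =
      exp (log a * j - b * log q * j ^ 2 - e * exp (-log eps - (-log d) * j)) := by
  have hdj : d ^ j / eps = exp (-log eps - (-log d) * j) := by
    rw [← exp_log hd, ← exp_nat_mul, ← exp_log heps, ← exp_sub, log_exp, log_exp]
    ring_nf
  rw [← exp_log ha, ← exp_nat_mul, exp_log ha, rpow_def_of_pos hq, mul_div_assoc, hdj,
    ← exp_add, ← exp_add]
  ring_nf

theorem stmt_12_general (q Δ1 Δ2 Δ3 Δ4 : ℝ) (hq : 1 < q)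
    (h1 : 0 < Δ1) (h3 : 0 < Δ3) (h4 : 0 < Δ4) (h4' : Δ4 < 1)
    (κ : ℝ) (hκ : 0 < κ) (hκ' : κ < 2 * Δ2 * (Real.log q) ^ 2 / (Real.log Δ4) ^ 2) :
    ∃ υ : ℝ, 0 < υ ∧ υ < Δ3 ∧ ∃ D1 : ℝ, ∃ D2 : ℝ, 0 < D2 ∧
      ∀ eps : ℝ, eps ∈ Set.Ioc 0 υ →
        (∑' j : ℕ, Δ1 ^ (j : ℕ) * q ^ (-Δ2 * (j : ℝ) ^ 2) *
            Real.exp (-Δ3 * Δ4 ^ (j : ℕ) / eps))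
          ≤ D2 * Real.exp (-(κ / (2 * Real.log q)) * (Real.log eps) ^ 2) * eps ^ D1 := by
  have hlq : 0 < log q := log_pos hq
  have hlog4 : log Δ4 < 0 := log_neg h4 h4'
  have hc : κ / (2 * log q) * (-log Δ4) ^ 2 < Δ2 * log q := by
    rw [lt_div_iff₀ (sq_pos_of_neg hlog4)] at hκ'
    rw [div_mul_eq_mul_div, div_lt_iff₀ (by positivity)]
    linarith
  obtain ⟨K, hK⟩ := exists_eventually_forall_mul_sq_le (div_pos hκ (by linarith))
    (neg_pos.2 hlog4) h3 hc (log Δ1 + log 2)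
  have hbound : ∀ᶠ eps in 𝓝[>] 0,
      ∑' j : ℕ, Δ1 ^ j * q ^ (-Δ2 * (j : ℝ) ^ 2) * exp (-Δ3 * Δ4 ^ j / eps)
        ≤ 2 * exp K * exp (-(κ / (2 * log q)) * log eps ^ 2) * eps ^ (0 : ℝ) := by
    filter_upwards [(tendsto_neg_atBot_atTop.comp tendsto_log_nhdsGT_zero).eventually hK,
      self_mem_nhdsWithin] with eps hL heps
    rw [rpow_zero, mul_one, mul_assoc]
    refine tsum_le_two_mul_of_le_geometric (fun j => by positivity) fun j => ?_
    have hLj := hL j (Nat.cast_nonneg j)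
    rw [pow_mul_rpow_mul_exp_eq_exp h1 (by linarith) h4 heps,
      ← exp_log (by norm_num : (0 : ℝ) < 1 / 2), ← exp_nat_mul, ← exp_add, ← exp_add, exp_le_exp, one_div, log_inv]
    simp only [Function.comp_apply] at hLj
    linarith
  obtain ⟨υ, hυ0, hυ, hυp⟩ := exists_Ioc_of_eventually_nhdsGT hbound h3
  exact ⟨υ, hυ0, hυ, 0, 2 * exp K, by positivity, hυp⟩

theorem stmt_12 (q Δ1 Δ2 Δ3 Δ4 : ℝ) (hq : 1 < q)
    (h1 : 0 < Δ1) (h2 : 0 < Δ2) (h3 : 0 < Δ3) (h4 : 0 < Δ4) (h4' : Δ4 < 1)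
    (κ : ℝ) (hκ : 0 < κ) (hκ' : κ < 2 * Δ2 * (Real.log q) ^ 2 / (Real.log Δ4) ^ 2) :
    ∃ υ : ℝ, 0 < υ ∧ υ < Δ3 ∧ ∃ D1 : ℝ, ∃ D2 : ℝ, 0 < D2 ∧
      ∀ eps : ℝ, eps ∈ Set.Ioc 0 υ →
        (∑' j : ℕ, Δ1 ^ (j : ℕ) * q ^ (-Δ2 * (j : ℝ) ^ 2) *
            Real.exp (-Δ3 * Δ4 ^ (j : ℕ) / eps))
          ≤ D2 * Real.exp (-(κ / (2 * Real.log q)) * (Real.log eps) ^ 2) * eps ^ D1 :=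
  stmt_12_general q Δ1 Δ2 Δ3 Δ4 hq h1 h3 h4 h4' κ hκ hκ'
end

section
/- (q-Gevrey Watson lemma.) Let q > 1, κ > 0, b > 0 and let f : [0,b] → ℂ be continuous. Suppose f admits Σ_{n≥0} a_n t^n ∈ ℂ[[t]] as q-Gevrey asymptotic expansion of order 1/κ at 0, i.e. there exist C, A > 0 and 0 < δ < b such that |f(t) − Σ_{n=0}^{N} a_n t^n| ≤ C A^N q^{(N+1)N/(2κ)} |t|^{N+1} for every N ≥ 0 and all t ∈ [0,δ]. Then the function I(x) = ∫_0^b f(s) e^{−s/x} ds admits the formal power series Σ_{n ≥ 0} a_n n! x^{n+1} as q-Gevrey asymptotic expansion of order 1/κ' at 0 for every 0 < κ' < κ: there exist C', A' > 0 and 0 < δ' < b such that |I(x) − Σ_{n=0}^{N−1} a_n n! x^{n+1}| ≤ C' (A')^{N+1} q^{(N+1)N/(2κ')} |x|^{N+1} for every N ≥ 1 and all x ∈ (0, δ']. -/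
/-!
Extend `f` by `0` beyond `b`. Since `∫₀^∞ sⁿ e^{-s/x} ds = n! xⁿ⁺¹`, the error with `N = m + 1`
terms is the Laplace transform of `f·1_{(0,b]} - ∑_{n ≤ m} aₙ sⁿ`, and this difference is at most
`D m · s^{m+1}` on all of `(0, ∞)`: near `0` by hypothesis, beyond `δ` by the size of `f` and of
the `aₙ δⁿ`. The coefficients are q-Gevrey of order `1/κ` because `aₙ δⁿ` is the difference of
two consecutive remainders at `δ`, so `D` is too. The error is then at most
`D m · (m+1)! · x^{m+2}`, and the factorial, being q-Gevrey of every order, only costs the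
passage from `κ` to any `κ' < κ`.
-/

open MeasureTheory Set Real
open scoped Nat

/-- The q-analogue of `n! ^ (1 / κ)`: `IsQGevrey q κ u` says that `u` is q-Gevrey of order
`1 / κ`. -/
noncomputable def qGevreyWeight (q κ : ℝ) (n : ℕ) : ℝ := q ^ (((n : ℝ) + 1) * n / (2 * κ))

def IsQGevrey (q κ : ℝ) (u : ℕ → ℝ) : Prop :=
  ∃ C A : ℝ, 0 ≤ C ∧ 1 ≤ A ∧ ∀ n, u n ≤ C * A ^ n * qGevreyWeight q κ n

section QGevrey

variable {q κ : ℝ} {u v : ℕ → ℝ}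

@[simp]
lemma qGevreyWeight_zero : qGevreyWeight q κ 0 = 1 := by
  simp [qGevreyWeight]

lemma qGevreyWeight_nonneg (hq : 0 ≤ q) (n : ℕ) : 0 ≤ qGevreyWeight q κ n :=
  rpow_nonneg hq _

lemma one_le_qGevreyWeight (hq : 1 ≤ q) (hκ : 0 ≤ κ) (n : ℕ) : 1 ≤ qGevreyWeight q κ n :=
  one_le_rpow hq (by positivity)

lemma qGevreyWeight_mono (hq : 1 ≤ q) (hκ : 0 ≤ κ) : Monotone (qGevreyWeight q κ) :=
  fun m n hmn => rpow_le_rpow_of_exponent_le hq (by gcongr)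

lemma qGevreyWeight_mul {κ₁ κ₂ : ℝ} (hq : 0 < q) (hκ : κ⁻¹ = κ₁⁻¹ + κ₂⁻¹) (n : ℕ) :
    qGevreyWeight q κ₁ n * qGevreyWeight q κ₂ n = qGevreyWeight q κ n := by
  simp only [qGevreyWeight, ← rpow_add hq, div_eq_mul_inv, mul_inv, hκ]
  ring_nf

lemma IsQGevrey.mono (hv : IsQGevrey q κ v) (huv : ∀ n, u n ≤ v n) : IsQGevrey q κ u :=
  let ⟨C, A, hC, hA, hvCA⟩ := hv
  ⟨C, A, hC, hA, fun n => (huv n).trans (hvCA n)⟩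

lemma isQGevrey_mul_pow_mul_qGevreyWeight (hq : 0 ≤ q) {C A : ℝ} (hC : 0 ≤ C) (hA : 0 ≤ A) :
    IsQGevrey q κ fun n => C * A ^ n * qGevreyWeight q κ n :=
  ⟨C, max A 1, hC, le_max_right _ _, fun n =>
    mul_le_mul_of_nonneg_right
      (mul_le_mul_of_nonneg_left (pow_le_pow_left₀ hA (le_max_left _ _) n) hC)
      (qGevreyWeight_nonneg hq n)⟩

lemma isQGevrey_const (hq : 1 ≤ q) (hκ : 0 ≤ κ) {c : ℝ} (hc : 0 ≤ c) :
    IsQGevrey q κ fun _ => c :=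
  ⟨c, 1, hc, le_rfl, fun n => by
    simpa using mul_le_mul_of_nonneg_left (one_le_qGevreyWeight hq hκ n) hc⟩

lemma IsQGevrey.add (hq : 0 ≤ q) (hu : IsQGevrey q κ u) (hv : IsQGevrey q κ v) :
    IsQGevrey q κ (u + v) := by
  obtain ⟨C₁, A₁, hC₁, hA₁, hu⟩ := hu
  obtain ⟨C₂, A₂, hC₂, hA₂, hv⟩ := hv
  set A := max A₁ A₂
  refine ⟨C₁ + C₂, A, by positivity, hA₁.trans (le_max_left _ _), fun n => ?_⟩
  have hw := qGevreyWeight_nonneg (κ := κ) hq n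
  have h₁ : C₁ * A₁ ^ n ≤ C₁ * A ^ n :=
    mul_le_mul_of_nonneg_left (pow_le_pow_left₀ (by linarith) (le_max_left _ _) n) hC₁
  have h₂ : C₂ * A₂ ^ n ≤ C₂ * A ^ n :=
    mul_le_mul_of_nonneg_left (pow_le_pow_left₀ (by linarith) (le_max_right _ _) n) hC₂
  calc u n + v n ≤ (C₁ * A₁ ^ n + C₂ * A₂ ^ n) * qGevreyWeight q κ n := by
        linarith [hu n, hv n]
    _ ≤ (C₁ * A ^ n + C₂ * A ^ n) * qGevreyWeight q κ n :=
        mul_le_mul_of_nonneg_right (add_le_add h₁ h₂) hw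
    _ = (C₁ + C₂) * A ^ n * qGevreyWeight q κ n := by ring

lemma IsQGevrey.const_mul (hu : IsQGevrey q κ u) {c : ℝ} (hc : 0 ≤ c) :
    IsQGevrey q κ fun n => c * u n := by
  obtain ⟨C, A, hC, hA, hu⟩ := hu
  exact ⟨c * C, A, by positivity, hA, fun n => by
    simpa only [mul_assoc] using mul_le_mul_of_nonneg_left (hu n) hc⟩

lemma IsQGevrey.pow_mul (hq : 0 ≤ q) (hu : IsQGevrey q κ u) {c : ℝ} (hc : 0 ≤ c) :
    IsQGevrey q κ fun n => c ^ n * u n := by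
  obtain ⟨C, A, hC, hA, hu⟩ := hu
  refine ⟨C, (c + 1) * A, hC, by nlinarith, fun n => ?_⟩
  have hw := qGevreyWeight_nonneg (κ := κ) hq n
  have hbound : 0 ≤ C * A ^ n * qGevreyWeight q κ n := by positivity
  calc c ^ n * u n ≤ c ^ n * (C * A ^ n * qGevreyWeight q κ n) :=
        mul_le_mul_of_nonneg_left (hu n) (by positivity)
    _ ≤ (c + 1) ^ n * (C * A ^ n * qGevreyWeight q κ n) :=
        mul_le_mul_of_nonneg_right (pow_le_pow_left₀ hc (by linarith) n) hbound
    _ = C * ((c + 1) * A) ^ n * qGevreyWeight q κ n := by rw [mul_pow]; ring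

lemma IsQGevrey.mul {κ₁ κ₂ : ℝ} (hq : 0 < q) (hκ : κ⁻¹ = κ₁⁻¹ + κ₂⁻¹)
    (hu : IsQGevrey q κ₁ u) (hv : IsQGevrey q κ₂ v) (hu₀ : ∀ n, 0 ≤ u n) :
    IsQGevrey q κ (u * v) := by
  obtain ⟨C₁, A₁, hC₁, hA₁, hu⟩ := hu
  obtain ⟨C₂, A₂, hC₂, hA₂, hv⟩ := hv
  refine ⟨C₁ * C₂, A₁ * A₂, by positivity, one_le_mul_of_one_le_of_one_le hA₁ hA₂, fun n => ?_⟩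
  have hw₂ := qGevreyWeight_nonneg (κ := κ₂) hq.le n
  calc u n * v n ≤ u n * (C₂ * A₂ ^ n * qGevreyWeight q κ₂ n) :=
        mul_le_mul_of_nonneg_left (hv n) (hu₀ n)
    _ ≤ (C₁ * A₁ ^ n * qGevreyWeight q κ₁ n) * (C₂ * A₂ ^ n * qGevreyWeight q κ₂ n) :=
        mul_le_mul_of_nonneg_right (hu n) (by positivity)
    _ = C₁ * C₂ * (A₁ * A₂) ^ n * qGevreyWeight q κ n := by
        rw [← qGevreyWeight_mul hq hκ]; ring

lemma IsQGevrey.sum_range_succ (hq : 1 ≤ q) (hκ : 0 ≤ κ) (hu : IsQGevrey q κ u) :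
    IsQGevrey q κ fun n => ∑ k ∈ Finset.range (n + 1), u k := by
  obtain ⟨C, A, hC, hA, hu⟩ := hu
  refine ⟨C, 2 * A, hC, by linarith, fun n => ?_⟩
  have hw := qGevreyWeight_nonneg (q := q) (κ := κ) (by linarith) n
  have hterm : ∀ k ∈ Finset.range (n + 1), u k ≤ C * A ^ n * qGevreyWeight q κ n := by
    intro k hk
    have hkn : k ≤ n := Nat.lt_succ_iff.mp (Finset.mem_range.mp hk)
    refine (hu k).trans (mul_le_mul (mul_le_mul_of_nonneg_left (pow_le_pow_right₀ hA hkn) hC)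
      (qGevreyWeight_mono hq hκ hkn) (qGevreyWeight_nonneg (by linarith) k) (by positivity))
  have hn : ((n + 1 : ℕ) : ℝ) ≤ 2 ^ n := by exact_mod_cast Nat.lt_two_pow_self
  calc ∑ k ∈ Finset.range (n + 1), u k
      ≤ ((n + 1 : ℕ) : ℝ) * (C * A ^ n * qGevreyWeight q κ n) := by
        simpa using Finset.sum_le_card_nsmul _ _ _ hterm
    _ ≤ 2 ^ n * (C * A ^ n * qGevreyWeight q κ n) :=
        mul_le_mul_of_nonneg_right hn (by positivity)
    _ = C * (2 * A) ^ n * qGevreyWeight q κ n := by ring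

lemma IsQGevrey.of_comp_succ (hq : 1 ≤ q) (hκ : 0 ≤ κ)
    (hu : IsQGevrey q κ fun n => u (n + 1)) : IsQGevrey q κ u := by
  obtain ⟨C, A, hC, hA, hu⟩ := hu
  refine ⟨max C (u 0), A, hC.trans (le_max_left _ _), hA, fun n => ?_⟩
  cases n with
  | zero => simp
  | succ n =>
    have hw := qGevreyWeight_nonneg (q := q) (κ := κ) (by linarith) n
    calc u (n + 1) ≤ C * A ^ n * qGevreyWeight q κ n := hu n
      _ ≤ max C (u 0) * A ^ (n + 1) * qGevreyWeight q κ (n + 1) :=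
        mul_le_mul (mul_le_mul (le_max_left _ _) (pow_le_pow_right₀ hA n.le_succ)
          (by positivity) (hC.trans (le_max_left _ _)))
          (qGevreyWeight_mono hq hκ n.le_succ) hw
          (mul_nonneg (hC.trans (le_max_left _ _)) (by positivity))

lemma IsQGevrey.exists_bound_succ (hq : 1 ≤ q) (hκ : 0 ≤ κ) (hu : IsQGevrey q κ u) :
    ∃ C A : ℝ, 0 < C ∧ 0 < A ∧ ∀ n, u n ≤ C * A ^ (n + 2) * qGevreyWeight q κ (n + 1) := by
  obtain ⟨C, A, hC, hA, hu⟩ := hu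
  refine ⟨C + 1, A, by linarith, by linarith, fun n => (hu n).trans ?_⟩
  have hw := qGevreyWeight_nonneg (q := q) (κ := κ) (by linarith) n
  exact mul_le_mul (mul_le_mul (by linarith) (pow_le_pow_right₀ hA (by omega))
    (by positivity) (by linarith)) (qGevreyWeight_mono hq hκ n.le_succ) hw (by positivity)

lemma isQGevrey_factorial_succ (hq : 1 < q) (hκ : 0 < κ) :
    IsQGevrey q κ fun n => ((n + 1)! : ℝ) := by
  set r := q ^ (2 * κ)⁻¹
  have hr : 1 < r := one_lt_rpow hq (by positivity)
  have hr' : 0 < (r - 1)⁻¹ := inv_pos.2 (by linarith)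
  set K := 1 + (r - 1)⁻¹
  have hlin : ∀ n : ℕ, ((n + 1 : ℕ) : ℝ) ≤ K * r ^ n := by
    intro n
    have hb := one_add_mul_le_pow (a := r - 1) (by linarith) n
    have : (r - 1) * (r - 1)⁻¹ = 1 := mul_inv_cancel₀ (by linarith)
    rw [add_sub_cancel] at hb
    push_cast
    nlinarith
  refine ⟨K, K, by linarith, by linarith, fun n => ?_⟩
  have hw : r ^ (n * (n + 1)) = qGevreyWeight q κ n := by
    rw [qGevreyWeight, ← rpow_natCast, ← rpow_mul (by linarith)]
    push_cast; ring_nf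
  calc ((n + 1)! : ℝ) ≤ ((n + 1 : ℕ) : ℝ) ^ (n + 1) := by exact_mod_cast Nat.factorial_le_pow _
    _ ≤ (K * r ^ n) ^ (n + 1) := pow_le_pow_left₀ (by positivity) (hlin n) _
    _ = K * K ^ n * r ^ (n * (n + 1)) := by rw [mul_pow, pow_succ, pow_mul]; ring
    _ = K * K ^ n * qGevreyWeight q κ n := by rw [hw]

end QGevrey

lemma isQGevrey_norm_mul_pow {q κ C A t : ℝ} {z : ℂ} {a : ℕ → ℂ} (hq : 1 ≤ q) (hκ : 0 ≤ κ)
    (hC : 0 ≤ C) (hA : 0 ≤ A) (ht : 0 ≤ t)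
    (h : ∀ N : ℕ, ‖z - ∑ n ∈ Finset.range (N + 1), a n * (t : ℂ) ^ n‖
      ≤ C * A ^ N * qGevreyWeight q κ N * t ^ (N + 1)) :
    IsQGevrey q κ fun n => ‖a n‖ * t ^ n := by
  set ρ : ℕ → ℝ := fun N => ‖z - ∑ n ∈ Finset.range N, a n * (t : ℂ) ^ n‖
  have hρsucc : IsQGevrey q κ fun N => ρ (N + 1) :=
    (((isQGevrey_mul_pow_mul_qGevreyWeight (by linarith) hC hA).pow_mul (by linarith) ht).const_mul
      ht).mono fun N => (h N).trans_eq (by ring)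
  have hρ : IsQGevrey q κ ρ := hρsucc.of_comp_succ hq hκ
  refine (hρ.add (by linarith) hρsucc).mono fun n => ?_
  have hdiff : a n * (t : ℂ) ^ n
      = (z - ∑ k ∈ Finset.range n, a k * (t : ℂ) ^ k)
        - (z - ∑ k ∈ Finset.range (n + 1), a k * (t : ℂ) ^ k) := by
    rw [Finset.sum_range_succ]; ring
  calc ‖a n‖ * t ^ n = ‖a n * (t : ℂ) ^ n‖ := by
        rw [norm_mul, norm_pow, Complex.norm_real, norm_of_nonneg ht]
    _ ≤ ρ n + ρ (n + 1) := by rw [hdiff]; exact norm_sub_le _ _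

section Laplace

variable {x : ℝ}

lemma integral_pow_mul_exp_neg_div (hx : 0 < x) (n : ℕ) :
    ∫ s in Ioi (0 : ℝ), s ^ n * rexp (-(s / x)) = n ! * x ^ (n + 1) := by
  have h := integral_rpow_mul_exp_neg_mul_Ioi (a := n + 1) (by positivity) (inv_pos.2 hx)
  rw [add_sub_cancel_right, one_div, inv_inv, Gamma_nat_eq_factorial, ← Nat.cast_add_one,
    rpow_natCast] at h
  rw [mul_comm, ← h]
  refine setIntegral_congr_fun measurableSet_Ioi fun s _ => ?_
  simp only [rpow_natCast, div_eq_inv_mul]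

lemma integrableOn_pow_mul_exp_neg_div (hx : 0 < x) (n : ℕ) :
    IntegrableOn (fun s => s ^ n * rexp (-(s / x))) (Ioi 0) :=
  .of_integral_ne_zero (by rw [integral_pow_mul_exp_neg_div hx]; positivity)

lemma norm_integral_mul_exp_neg_div_le {F : ℝ → ℂ} {D : ℝ} (k : ℕ) (hx : 0 < x)
    (hF : ∀ s > 0, ‖F s‖ ≤ D * s ^ k) :
    ‖∫ s in Ioi 0, F s * rexp (-(s / x))‖ ≤ D * k ! * x ^ (k + 1) := by
  calc ‖∫ s in Ioi 0, F s * rexp (-(s / x))‖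
      ≤ ∫ s in Ioi 0, D * (s ^ k * rexp (-(s / x))) := by
        refine norm_integral_le_of_norm_le ((integrableOn_pow_mul_exp_neg_div hx k).const_mul D)
          ((ae_restrict_iff' measurableSet_Ioi).2 (.of_forall fun s hs => ?_))
        rw [norm_mul, Complex.norm_real, norm_of_nonneg (exp_pos _).le, ← mul_assoc]
        exact mul_le_mul_of_nonneg_right (hF s hs) (exp_pos _).le
    _ = D * k ! * x ^ (k + 1) := by
        rw [integral_const_mul, integral_pow_mul_exp_neg_div hx, mul_assoc]

lemma integral_mul_exp_neg_div_sub_sum_eq {f : ℝ → ℂ} {b : ℝ} (hb : 0 ≤ b)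
    (hf : ContinuousOn f (Icc 0 b)) (hx : 0 < x) (a : ℕ → ℂ) (N : ℕ) :
    (∫ s in (0 : ℝ)..b, f s * Complex.exp (-(s / x : ℝ)))
        - ∑ n ∈ Finset.range N, a n * (n ! : ℂ) * (x : ℂ) ^ (n + 1)
      = ∫ s in Ioi 0,
          ((Ioc 0 b).indicator f s - ∑ n ∈ Finset.range N, a n * (s : ℂ) ^ n) * rexp (-(s / x)) := by
  have hmoment : ∀ n, IntegrableOn (fun s : ℝ => (s : ℂ) ^ n * rexp (-(s / x))) (Ioi 0) ∧
      ∫ s in Ioi (0 : ℝ), (s : ℂ) ^ n * rexp (-(s / x)) = n ! * (x : ℂ) ^ (n + 1) := by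
    intro n
    have hcast : (fun s : ℝ => (s : ℂ) ^ n * rexp (-(s / x)))
        = fun s : ℝ => ((s ^ n * rexp (-(s / x)) : ℝ) : ℂ) := by
      ext s; push_cast; rfl
    rw [hcast, integral_complex_ofReal, integral_pow_mul_exp_neg_div hx]
    exact ⟨(integrableOn_pow_mul_exp_neg_div hx n).ofReal, by push_cast; rfl⟩
  have hpoly : ∫ s in Ioi (0 : ℝ), (∑ n ∈ Finset.range N, a n * (s : ℂ) ^ n) * rexp (-(s / x))
      = ∑ n ∈ Finset.range N, a n * (n ! : ℂ) * (x : ℂ) ^ (n + 1) := by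
    simp_rw [Finset.sum_mul, mul_assoc]
    rw [integral_finsetSum _ fun n _ => (hmoment n).1.const_mul (a n)]
    simp_rw [integral_const_mul, (hmoment _).2]
  have hf' : IntegrableOn (fun s => f s * rexp (-(s / x))) (Ioc 0 b) :=
    ((hf.mul (Complex.continuous_ofReal.comp
      (continuous_exp.comp (continuous_id.div_const x).neg)).continuousOn).integrableOn_Icc).mono_set
      Ioc_subset_Icc_self
  have hindicator : (fun s => (Ioc 0 b).indicator f s * (rexp (-(s / x)) : ℂ))
      = (Ioc 0 b).indicator fun s => f s * rexp (-(s / x)) := by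
    ext s; rw [indicator_mul_left]
  have htrunc : ∫ s in (0 : ℝ)..b, f s * Complex.exp (-(s / x : ℝ))
      = ∫ s in Ioi 0, (Ioc 0 b).indicator f s * rexp (-(s / x)) := by
    rw [hindicator, setIntegral_indicator measurableSet_Ioc, inter_eq_right.2 Ioc_subset_Ioi_self,
      intervalIntegral.integral_of_le hb]
    push_cast; rfl
  rw [htrunc, ← hpoly, ← integral_sub]
  · simp_rw [sub_mul]
  · rw [hindicator]
    exact (hf'.integrable_indicator measurableSet_Ioc).integrableOn
  · simp_rw [Finset.sum_mul, mul_assoc]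
    exact integrable_finsetSum _ fun n _ => (hmoment n).1.const_mul (a n)

end Laplace

lemma norm_sub_sum_pow_le_of_le {δ s : ℝ} (z : ℂ) (a : ℕ → ℂ) (N : ℕ) (hδ : 0 < δ)
    (hs : δ ≤ s) :
    ‖z - ∑ n ∈ Finset.range N, a n * (s : ℂ) ^ n‖
      ≤ (‖z‖ + ∑ n ∈ Finset.range N, ‖a n‖ * δ ^ n) * (s / δ) ^ N := by
  have hsδ : 1 ≤ s / δ := (one_le_div hδ).2 hs
  have hterm : ∀ n ∈ Finset.range N, ‖a n * (s : ℂ) ^ n‖ ≤ ‖a n‖ * δ ^ n * (s / δ) ^ N := by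
    intro n hn
    have hnN : n ≤ N := (Finset.mem_range.1 hn).le
    have hsplit : s ^ n = δ ^ n * (s / δ) ^ n := by rw [← mul_pow, mul_div_cancel₀ _ hδ.ne']
    rw [norm_mul, norm_pow, Complex.norm_real, norm_of_nonneg (hδ.le.trans hs), hsplit,
      mul_assoc]
    gcongr
  calc ‖z - ∑ n ∈ Finset.range N, a n * (s : ℂ) ^ n‖
      ≤ ‖z‖ + ∑ n ∈ Finset.range N, ‖a n * (s : ℂ) ^ n‖ :=
        (norm_sub_le _ _).trans (add_le_add_right (norm_sum_le _ _) _)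
    _ ≤ ‖z‖ * (s / δ) ^ N + ∑ n ∈ Finset.range N, ‖a n‖ * δ ^ n * (s / δ) ^ N :=
        add_le_add (le_mul_of_one_le_right (norm_nonneg z) (one_le_pow₀ hsδ))
          (Finset.sum_le_sum hterm)
    _ = (‖z‖ + ∑ n ∈ Finset.range N, ‖a n‖ * δ ^ n) * (s / δ) ^ N := by
        rw [add_mul, Finset.sum_mul]

lemma norm_indicator_sub_sum_le {f : ℝ → ℂ} {a : ℕ → ℂ} {b δ M R s : ℝ} {N : ℕ}
    (hδ : 0 < δ) (hδb : δ ≤ b) (hM : ∀ t ∈ Icc 0 b, ‖f t‖ ≤ M) (hR : 0 ≤ R)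
    (hnear : ∀ t ∈ Icc 0 δ, ‖f t - ∑ n ∈ Finset.range N, a n * (t : ℂ) ^ n‖ ≤ R * |t| ^ N)
    (hs : 0 < s) :
    ‖(Ioc 0 b).indicator f s - ∑ n ∈ Finset.range N, a n * (s : ℂ) ^ n‖
      ≤ (R + (M + ∑ n ∈ Finset.range N, ‖a n‖ * δ ^ n) * δ⁻¹ ^ N) * s ^ N := by
  have hM₀ : 0 ≤ M := (norm_nonneg _).trans (hM b (mem_Icc.2 ⟨hδ.le.trans hδb, le_rfl⟩))
  have hfar : 0 ≤ (M + ∑ n ∈ Finset.range N, ‖a n‖ * δ ^ n) * δ⁻¹ ^ N := by positivity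
  rcases le_or_gt s δ with hsδ | hδs
  · rw [indicator_of_mem (show s ∈ Ioc 0 b from ⟨hs, hsδ.trans hδb⟩)]
    calc _ ≤ R * s ^ N := by simpa [abs_of_pos hs] using hnear s (mem_Icc.2 ⟨hs.le, hsδ⟩)
      _ ≤ _ := by gcongr; linarith
  · have hind : ‖(Ioc 0 b).indicator f s‖ ≤ M := by
      by_cases hsb : s ∈ Ioc 0 b
      · rw [indicator_of_mem hsb]; exact hM s (Ioc_subset_Icc_self hsb)
      · rw [indicator_of_notMem hsb, norm_zero]; exact hM₀
    calc _ ≤ (‖(Ioc 0 b).indicator f s‖ + ∑ n ∈ Finset.range N, ‖a n‖ * δ ^ n) * (s / δ) ^ N :=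
          norm_sub_sum_pow_le_of_le _ a N hδ hδs.le
      _ ≤ (M + ∑ n ∈ Finset.range N, ‖a n‖ * δ ^ n) * δ⁻¹ ^ N * s ^ N := by
          rw [div_eq_mul_inv, mul_pow, mul_comm (s ^ N), ← mul_assoc]
          gcongr
      _ ≤ _ := by gcongr; linarith

lemma exists_isQGevrey_remainder_bound_Ioi {q κ b C A δ M : ℝ} {f : ℝ → ℂ} {a : ℕ → ℂ}
    (hq : 1 ≤ q) (hκ : 0 ≤ κ) (hC : 0 ≤ C) (hA : 0 ≤ A) (hδ : 0 < δ) (hδb : δ ≤ b)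
    (hM : ∀ t ∈ Icc 0 b, ‖f t‖ ≤ M)
    (hasymp : ∀ N : ℕ, ∀ t ∈ Icc 0 δ, ‖f t - ∑ n ∈ Finset.range (N + 1), a n * (t : ℂ) ^ n‖
      ≤ C * A ^ N * qGevreyWeight q κ N * |t| ^ (N + 1)) :
    ∃ D : ℕ → ℝ, IsQGevrey q κ D ∧ (∀ m, 0 ≤ D m) ∧ ∀ m, ∀ s > 0,
      ‖(Ioc 0 b).indicator f s - ∑ n ∈ Finset.range (m + 1), a n * (s : ℂ) ^ n‖
        ≤ D m * s ^ (m + 1) := by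
  have hq₀ : 0 ≤ q := by linarith
  have hM₀ : 0 ≤ M := (norm_nonneg _).trans (hM δ ⟨hδ.le, hδb⟩)
  have hnear : ∀ m, 0 ≤ C * A ^ m * qGevreyWeight q κ m := fun m =>
    mul_nonneg (by positivity) (qGevreyWeight_nonneg hq₀ m)
  have hcoeff : IsQGevrey q κ fun n => ‖a n‖ * δ ^ n :=
    isQGevrey_norm_mul_pow hq hκ hC hA hδ.le fun N =>
      (hasymp N δ ⟨hδ.le, le_rfl⟩).trans_eq (by rw [abs_of_pos hδ])
  have hfar : IsQGevrey q κ fun m =>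
      (M + ∑ n ∈ Finset.range (m + 1), ‖a n‖ * δ ^ n) * δ⁻¹ ^ (m + 1) :=
    (((isQGevrey_const hq hκ hM₀).add hq₀ (hcoeff.sum_range_succ hq hκ)).pow_mul
      hq₀ (inv_nonneg.2 hδ.le)).const_mul (inv_nonneg.2 hδ.le) |>.mono fun m =>
        le_of_eq (by simp only [Pi.add_apply]; ring)
  refine ⟨_, (isQGevrey_mul_pow_mul_qGevreyWeight hq₀ hC hA).add hq₀ hfar,
    fun m => add_nonneg (hnear m) (by positivity), fun m s hs => ?_⟩
  exact norm_indicator_sub_sum_le hδ hδb hM (hnear m) (hasymp m) hs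

theorem stmt_13_general (q κ b : ℝ) (hq : 1 < q) (hκ : 0 < κ)
    (f : ℝ → ℂ) (hf : ContinuousOn f (Set.Icc 0 b))
    (a : ℕ → ℂ) (C A δ : ℝ) (hC : 0 < C) (hA : 0 < A) (hδ : 0 < δ) (hδb : δ < b)
    (hasymp : ∀ N : ℕ, ∀ t ∈ Set.Icc (0:ℝ) δ,
      ‖f t - ∑ n ∈ Finset.range (N + 1), a n * (t : ℂ) ^ n‖
        ≤ C * A ^ N * q ^ (((N : ℝ) + 1) * N / (2 * κ)) * |t| ^ (N + 1)) :
    ∀ κ' : ℝ, 0 < κ' → κ' < κ →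
      ∃ C' A' δ' : ℝ, 0 < C' ∧ 0 < A' ∧ 0 < δ' ∧ δ' < b ∧
        ∀ N : ℕ, 1 ≤ N → ∀ x ∈ Set.Ioc (0:ℝ) δ',
          ‖(∫ s in (0:ℝ)..b, f s * Complex.exp (-(s / x : ℝ)))
              - ∑ n ∈ Finset.range N, a n * (n.factorial : ℂ) * (x : ℂ) ^ (n + 1)‖
            ≤ C' * A' ^ (N + 1) * q ^ (((N : ℝ) + 1) * N / (2 * κ')) * x ^ (N + 1) := by
  intro κ' hκ' hκ'κ
  obtain ⟨M, hM⟩ := isCompact_Icc.exists_bound_of_continuousOn hf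
  obtain ⟨D, hD, hD₀, hDbound⟩ :=
    exists_isQGevrey_remainder_bound_Ioi hq.le hκ.le hC.le hA.le hδ hδb.le hM hasymp
  have hκ'' : 0 < (κ'⁻¹ - κ⁻¹)⁻¹ := inv_pos.2 (sub_pos.2 (inv_strictAnti₀ hκ' hκ'κ))
  obtain ⟨C', A', hC', hA', hbound⟩ :=
    (hD.mul (by linarith) (by rw [inv_inv]; ring) (isQGevrey_factorial_succ hq hκ'')
      hD₀).exists_bound_succ hq.le hκ'.le
  refine ⟨C', A', δ, hC', hA', hδ, hδb, fun N hN x hx => ?_⟩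
  obtain ⟨m, rfl⟩ : ∃ m, N = m + 1 := ⟨N - 1, by omega⟩
  rw [integral_mul_exp_neg_div_sub_sum_eq (hδ.le.trans hδb.le) hf hx.1]
  calc _ ≤ D m * (m + 1)! * x ^ (m + 1 + 1) :=
        norm_integral_mul_exp_neg_div_le (m + 1) hx.1 (hDbound m)
    _ ≤ _ := mul_le_mul_of_nonneg_right (hbound m) (pow_nonneg hx.1.le _)

theorem stmt_13 (q κ b : ℝ) (hq : 1 < q) (hκ : 0 < κ) (hb : 0 < b)
    (f : ℝ → ℂ) (hf : ContinuousOn f (Set.Icc 0 b))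
    (a : ℕ → ℂ) (C A δ : ℝ) (hC : 0 < C) (hA : 0 < A) (hδ : 0 < δ) (hδb : δ < b)
    (hasymp : ∀ N : ℕ, ∀ t ∈ Set.Icc (0:ℝ) δ,
      ‖f t - ∑ n ∈ Finset.range (N + 1), a n * (t : ℂ) ^ n‖
        ≤ C * A ^ N * q ^ (((N : ℝ) + 1) * N / (2 * κ)) * |t| ^ (N + 1)) :
    ∀ κ' : ℝ, 0 < κ' → κ' < κ →
      ∃ C' A' δ' : ℝ, 0 < C' ∧ 0 < A' ∧ 0 < δ' ∧ δ' < b ∧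
        ∀ N : ℕ, 1 ≤ N → ∀ x ∈ Set.Ioc (0:ℝ) δ',
          ‖(∫ s in (0:ℝ)..b, f s * Complex.exp (-(s / x : ℝ)))
              - ∑ n ∈ Finset.range N, a n * (n.factorial : ℂ) * (x : ℂ) ^ (n + 1)‖
            ≤ C' * A' ^ (N + 1) * q ^ (((N : ℝ) + 1) * N / (2 * κ')) * x ^ (N + 1) :=
  stmt_13_general q κ b hq hκ f hf a C A δ hC hA hδ hδb hasymp
end
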